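/- arXiv:2509.15013 — 3 statements merged into one kernel-verified Lean document; each statement's English description precedes it below -/
import Mathlib

section
/- Let h ≥ h' ≥ 1, m ≥ 4, and n ≥ h − h' + 3. If there exists an MR (m, n, a=1, b=1, h) grid code over a finite field F_q, then there also exists an MR (m−2, n−(h−h'+1), a=1, b=1, h') grid code over the same field F_q. In particular, q(m, n, 1, 1, h) ≥ q(m−2, n−h+h'−1, 1, 1, h'), where q(·) denotes the minimum field size over which an MR grid code with those parameters exists. -/
open Finset

/-- A subset of `[m] × [n]`, viewed as the edge set of a bipartite graph with left
vertex set `Fin m` and right vertex set `Fin n`, is a *simple cycle* (of length `2k`,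
`k ≥ 2`) if it has the form
`{(i₁,j₁),(i₂,j₁),(i₂,j₂),(i₃,j₂),…,(i_k,j_k),(i₁,j_k)}`
for pairwise distinct `i₁,…,i_k` and pairwise distinct `j₁,…,j_k`. -/
def IsSimpleCycle {m n : ℕ} (C : Finset (Fin m × Fin n)) : Prop :=
  ∃ k : ℕ, 2 ≤ k ∧ ∃ (I : ℕ → Fin m) (J : ℕ → Fin n),
    Set.InjOn I (Set.Iio k) ∧ Set.InjOn J (Set.Iio k) ∧
    C = ((Finset.range k).image fun ℓ => (I ℓ, J ℓ)) ∪
        ((Finset.range k).image fun ℓ => (I ((ℓ + 1) % k), J ℓ))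

/-- An edge set is *acyclic* if it contains no simple cycle. -/
def IsAcyclicEdges {m n : ℕ} (E : Finset (Fin m × Fin n)) : Prop :=
  ∀ C ⊆ E, ¬ IsSimpleCycle C

/-- The parity-check matrix of an `(m, n, a = 1, b = 1, h)` grid code over `F` with
global parity-check vectors `c`.  Rows are indexed by `Fin m ⊕ (Fin (n-1) ⊕ Fin h)`
(the `m` row checks, the first `n - 1` column checks, and the `h` global checks) and
columns by `Fin m × Fin n`. -/
def gridH (F : Type*) [Field F] (m n h : ℕ) (c : Fin m × Fin n → Fin h → F) :
    Matrix (Fin m ⊕ (Fin (n - 1) ⊕ Fin h)) (Fin m × Fin n) F :=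
  Matrix.of fun r ij =>
    Sum.elim (fun i => if ij.1 = i then (1 : F) else 0)
      (Sum.elim (fun j : Fin (n - 1) => if (ij.2 : ℕ) = (j : ℕ) then (1 : F) else 0)
        (fun k => c ij k)) r

/-- The grid code with global parity checks `c` is *maximally recoverable* (MR) if the
columns of its parity-check matrix indexed by `E` are linearly independent for every
pattern `E` which is the union of an acyclic edge set and at most `h` further edges. -/
def IsMR (F : Type*) [Field F] (m n h : ℕ) (c : Fin m × Fin n → Fin h → F) : Prop :=
  ∀ E : Finset (Fin m × Fin n),
    (∃ E' F' : Finset (Fin m × Fin n),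
        IsAcyclicEdges E' ∧ F'.card ≤ h ∧ E = E' ∪ F') →
    ((gridH F m n h c).submatrix id (fun e : E => (e : Fin m × Fin n))).rank = E.card

/-- A *spanning tree* of the complete bipartite graph on `[m] ⊔ [n]`: an acyclic edge
set with `m + n - 1` edges. -/
def IsSpanningTree {m n : ℕ} (T : Finset (Fin m × Fin n)) : Prop :=
  IsAcyclicEdges T ∧ T.card = m + n - 1

/-- `IsCycleSumOf c C s` says `C` is a simple cycle
`{(i₁,j₁),(i₂,j₁),…,(i_k,j_k),(i₁,j_k)}` and
`s = Σ_{ℓ=1}^{k} (c^{i_ℓ,j_ℓ} − c^{i_{ℓ+1},j_ℓ})` (with `i_{k+1} := i₁`) is the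
corresponding cycle sum `Σ_H(C) ∈ F^h`. -/
def IsCycleSumOf {F : Type*} [Field F] {m n h : ℕ} (c : Fin m × Fin n → Fin h → F)
    (C : Finset (Fin m × Fin n)) (s : Fin h → F) : Prop :=
  ∃ k : ℕ, 2 ≤ k ∧ ∃ (I : ℕ → Fin m) (J : ℕ → Fin n),
    Set.InjOn I (Set.Iio k) ∧ Set.InjOn J (Set.Iio k) ∧
    C = ((Finset.range k).image fun ℓ => (I ℓ, J ℓ)) ∪
        ((Finset.range k).image fun ℓ => (I ((ℓ + 1) % k), J ℓ)) ∧
    s = ∑ ℓ ∈ Finset.range k, (c (I ℓ, J ℓ) - c (I ((ℓ + 1) % k), J ℓ))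

/-- `IsGammaCycleSumOf γ C g` says `C` is a simple cycle and
`g = γ(C) = Σ_{ℓ=1}^{k} (γ(i_ℓ,j_ℓ) − γ(i_{ℓ+1},j_ℓ))`. -/
def IsGammaCycleSumOf {F : Type*} [Field F] {m n : ℕ} (γ : Fin m × Fin n → F)
    (C : Finset (Fin m × Fin n)) (g : F) : Prop :=
  ∃ k : ℕ, 2 ≤ k ∧ ∃ (I : ℕ → Fin m) (J : ℕ → Fin n),
    Set.InjOn I (Set.Iio k) ∧ Set.InjOn J (Set.Iio k) ∧
    C = ((Finset.range k).image fun ℓ => (I ℓ, J ℓ)) ∪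
        ((Finset.range k).image fun ℓ => (I ((ℓ + 1) % k), J ℓ)) ∧
    g = ∑ ℓ ∈ Finset.range k, (γ (I ℓ, J ℓ) - γ (I ((ℓ + 1) % k), J ℓ))

/-!
Let `d = h - h'`. Fix the last two rows and `d + 1` further columns `j₀, j₁, …, j_d`. The
pattern they span is a star plus `d` edges, so by maximal recoverability the cycle sums of the `d`
rectangles with corner columns `j₀, j_t` are linearly independent: they span a `d`-dimensional
subspace `V ⊆ F^h`. Delete those rows and columns and compose the remaining global parity vectors
with a linear map `π : F^h → F^{h'}` with kernel `V`. A codeword of the small code supported on an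
acyclic set plus `h'` edges has its syndrome under the original global parity vectors in `V`;
subtracting the matching combination of rectangles gives a codeword of the large code supported
on an acyclic set plus `h' + d = h` edges, hence zero.
-/

open scoped Matrix

theorem Matrix.rank_submatrix_eq_card_iff {R C K : Type*} [Fintype R] [Fintype C] [Field K]
    (A : Matrix R C K) (E : Finset C) :
    (A.submatrix id ((↑) : E → C)).rank = E.card ↔
      ∀ x : C → K, (∀ e ∉ E, x e = 0) → A *ᵥ x = 0 → x = 0 := by
  classical
  have hcomb : ∀ x : C → K, (∀ e ∉ E, x e = 0) →
      ∑ e : E, x e • (A.submatrix id ((↑) : E → C)).col e = A *ᵥ x := by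
    intro x hx
    ext r
    simp only [Finset.sum_apply, Pi.smul_apply, Matrix.col_apply, Matrix.submatrix_apply, id,
      smul_eq_mul, Matrix.mulVec, dotProduct]
    rw [Finset.sum_coe_sort E fun e => x e * A r e]
    exact Finset.sum_subset (Finset.subset_univ E) (fun e _ he => by simp [hx e he])
      |>.trans (Finset.sum_congr rfl fun _ _ => mul_comm _ _)
  rw [Matrix.rank_eq_finrank_span_cols, ← Fintype.card_coe E, eq_comm, ← Set.finrank,
    ← linearIndependent_iff_card_eq_finrank_span, Fintype.linearIndependent_iff]
  constructor
  · intro h x hx hAx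
    ext e
    by_cases he : e ∈ E
    · exact h (fun e => x e) (by rw [hcomb x hx, hAx]) ⟨e, he⟩
    · exact hx e he
  · intro h g hg e
    set x : C → K := fun c => if hc : c ∈ E then g ⟨c, hc⟩ else 0
    have hx : ∀ c ∉ E, x c = 0 := fun c hc => dif_neg hc
    simpa [x] using congrFun (h x hx (by rw [← hcomb x hx, ← hg]; simp [x])) e

theorem Fintype.linearCombination_extend {K M α α' : Type*} [Semiring K] [AddCommMonoid M]
    [Module K M] [Fintype α] [Fintype α'] {f : α' → α} (hf : Function.Injective f) (v : α → M)
    (x : α' → K) :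
    Fintype.linearCombination K v (Function.extend f x 0) =
      Fintype.linearCombination K (v ∘ f) x := by
  simp only [Fintype.linearCombination_apply]
  refine (Fintype.sum_of_injective f hf _ _ (fun a ha => ?_)
    fun a => by simp [hf.extend_apply]).symm
  rw [Function.extend_apply' _ _ _ ha, Pi.zero_apply, zero_smul]

theorem Submodule.exists_linearMap_ker_eq {K W : Type*} [Field K] [AddCommGroup W] [Module K W]
    [FiniteDimensional K W] (V : Submodule K W) {k : ℕ}
    (hk : Module.finrank K V + k = Module.finrank K W) :
    ∃ π : W →ₗ[K] (Fin k → K), LinearMap.ker π = V := by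
  obtain ⟨e⟩ : Nonempty ((W ⧸ V) ≃ₗ[K] (Fin k → K)) := by
    apply FiniteDimensional.nonempty_linearEquiv_of_finrank_eq
    have := V.finrank_quotient_add_finrank
    rw [Module.finrank_fin_fun]
    omega
  exact ⟨e.toLinearMap ∘ₗ V.mkQ, by rw [LinearEquiv.ker_comp, Submodule.ker_mkQ]⟩

section Balanced
variable (K α β : Type*) [Semiring K] [Fintype α] [Fintype β]

def balanced : Submodule K (α × β → K) where
  carrier := {x | (∀ a, ∑ b, x (a, b) = 0) ∧ ∀ b, ∑ a, x (a, b) = 0}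
  add_mem' hx hy := ⟨fun a => by simp [Finset.sum_add_distrib, hx.1 a, hy.1 a],
    fun b => by simp [Finset.sum_add_distrib, hx.2 b, hy.2 b]⟩
  zero_mem' := ⟨fun _ => by simp, fun _ => by simp⟩
  smul_mem' r x hx := ⟨fun a => by simp [← Finset.mul_sum, hx.1 a],
    fun b => by simp [← Finset.mul_sum, hx.2 b]⟩

variable {K α β}

theorem mem_balanced_iff {x : α × β → K} :
    x ∈ balanced K α β ↔ (∀ a, ∑ b, x (a, b) = 0) ∧ ∀ b, ∑ a, x (a, b) = 0 := Iff.rfl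

theorem sum_fst_eq_zero_of_forall_ne {x : α × β → K} (hrow : ∀ a, ∑ b, x (a, b) = 0) {b₀ : β}
    (hcol : ∀ b ≠ b₀, ∑ a, x (a, b) = 0) : ∑ a, x (a, b₀) = 0 := by
  classical
  calc ∑ a, x (a, b₀) = ∑ b, ∑ a, x (a, b) :=
        (Finset.sum_eq_single b₀ (fun b _ hb => hcol b hb) (by simp)).symm
    _ = 0 := by rw [Finset.sum_comm]; simp [hrow]

theorem mul_mem_balanced {u : α → K} {w : β → K} (hu : ∑ a, u a = 0) (hw : ∑ b, w b = 0) :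
    (fun e : α × β => u e.1 * w e.2) ∈ balanced K α β :=
  ⟨fun a => by simp [← Finset.mul_sum, hw], fun b => by simp [← Finset.sum_mul, hu]⟩

theorem extend_mem_balanced {α' β' : Type*} [Fintype α'] [Fintype β'] {σ : α' → α}
    {τ : β' → β} (hσ : Function.Injective σ) (hτ : Function.Injective τ) {x : α' × β' → K}
    (hx : x ∈ balanced K α' β') : Function.extend (Prod.map σ τ) x 0 ∈ balanced K α β := by
  have hext : ∀ a b, Function.extend (Prod.map σ τ) x 0 (σ a, τ b) = x (a, b) := fun a b =>
    (hσ.prodMap hτ).extend_apply x 0 (a, b)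
  have hzero : ∀ a b, (a ∉ Set.range σ ∨ b ∉ Set.range τ) →
      Function.extend (Prod.map σ τ) x 0 (a, b) = 0 := by
    rintro a b hab
    refine Function.extend_apply' _ _ _ fun ⟨p, hp⟩ => ?_
    simp only [Prod.map, Prod.mk.injEq] at hp
    exact hab.elim (· ⟨p.1, hp.1⟩) (· ⟨p.2, hp.2⟩)
  refine ⟨fun a => ?_, fun b => ?_⟩
  · by_cases ha : a ∈ Set.range σ
    · obtain ⟨a, rfl⟩ := ha
      rw [← hx.1 a]
      exact (Fintype.sum_of_injective τ hτ _ _ (fun b hb => hzero _ b (.inr hb))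
        fun b => (hext a b).symm).symm
    · exact Finset.sum_eq_zero fun b _ => hzero a b (.inl ha)
  · by_cases hb : b ∈ Set.range τ
    · obtain ⟨b, rfl⟩ := hb
      rw [← hx.2 b]
      exact (Fintype.sum_of_injective σ hσ _ _ (fun a ha => hzero a _ (.inl ha))
        fun a => (hext a b).symm).symm
    · exact Finset.sum_eq_zero fun a _ => hzero a b (.inr hb)

end Balanced

section GridChecks
variable {F : Type*} [Field F] {m n h : ℕ} (c : Fin m × Fin n → Fin h → F)
  (x : Fin m × Fin n → F)

theorem gridH_mulVec_inl (i : Fin m) : (gridH F m n h c *ᵥ x) (.inl i) = ∑ j, x (i, j) := by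
  simp only [gridH, Matrix.mulVec, dotProduct, Matrix.of_apply, Sum.elim_inl, ite_mul, one_mul,
    zero_mul, Fintype.sum_prod_type]
  rw [Finset.sum_eq_single i (fun i' _ hi' => by simp [hi']) (by simp)]
  simp

theorem gridH_mulVec_inr_inl (j : Fin (n - 1)) :
    (gridH F m n h c *ᵥ x) (.inr (.inl j)) = ∑ i, x (i, ⟨j, by omega⟩) := by
  simp only [gridH, Matrix.mulVec, dotProduct, Matrix.of_apply, Sum.elim_inr, Sum.elim_inl,
    ite_mul, one_mul, zero_mul, Fintype.sum_prod_type]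
  refine Finset.sum_congr rfl fun i _ => ?_
  rw [Finset.sum_eq_single ⟨j, by omega⟩ (fun j' _ hj' => if_neg fun h => hj' (Fin.ext h))
    (by simp)]
  simp

theorem gridH_mulVec_inr_inr (k : Fin h) :
    (gridH F m n h c *ᵥ x) (.inr (.inr k)) = Fintype.linearCombination F c x k := by
  simp [gridH, Matrix.mulVec, dotProduct, Fintype.linearCombination_apply, mul_comm]

theorem gridH_mulVec_eq_zero_iff :
    gridH F m n h c *ᵥ x = 0 ↔
      x ∈ balanced F (Fin m) (Fin n) ∧ Fintype.linearCombination F c x = 0 := by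
  rw [mem_balanced_iff]
  constructor
  · intro hx
    have hrow : ∀ i, ∑ j, x (i, j) = 0 := fun i =>
      (gridH_mulVec_inl c x i).symm.trans (congrFun hx _)
    have hcol : ∀ j : Fin n, (j : ℕ) < n - 1 → ∑ i, x (i, j) = 0 := fun j hj =>
      (gridH_mulVec_inr_inl c x ⟨j, hj⟩).symm.trans (congrFun hx _)
    refine ⟨⟨hrow, fun j => ?_⟩,
      funext fun k => (gridH_mulVec_inr_inr c x k).symm.trans (congrFun hx _)⟩
    -- `gridH` has no check for the last column; it is implied by the other checks
    by_cases hj : (j : ℕ) < n - 1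
    · exact hcol j hj
    · exact sum_fst_eq_zero_of_forall_ne hrow fun j' hj' =>
        hcol j' (by have := Fin.val_ne_of_ne hj'; omega)
  · rintro ⟨⟨hrow, hcol⟩, hglob⟩
    funext r
    rcases r with i | j | k
    · simp [gridH_mulVec_inl, hrow]
    · simp [gridH_mulVec_inr_inl, hcol]
    · simp [gridH_mulVec_inr_inr, hglob]

end GridChecks

def IsMRPattern {m n : ℕ} (h : ℕ) (E : Finset (Fin m × Fin n)) : Prop :=
  ∃ E' F' : Finset (Fin m × Fin n), IsAcyclicEdges E' ∧ F'.card ≤ h ∧ E = E' ∪ F'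

theorem isMR_iff {F : Type*} [Field F] {m n h : ℕ} (c : Fin m × Fin n → Fin h → F) :
    IsMR F m n h c ↔ ∀ E, IsMRPattern h E → ∀ x : Fin m × Fin n → F, (∀ e ∉ E, x e = 0) →
      x ∈ balanced F (Fin m) (Fin n) → Fintype.linearCombination F c x = 0 → x = 0 := by
  simp only [IsMR, Matrix.rank_submatrix_eq_card_iff, gridH_mulVec_eq_zero_iff, and_imp]
  rfl

theorem exists_ne_add_one_mod_eq {k ℓ : ℕ} (hk : 2 ≤ k) (hℓ : ℓ < k) :
    ∃ ℓ' < k, ℓ' ≠ ℓ ∧ (ℓ' + 1) % k = ℓ := by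
  rcases ℓ with _ | ℓ
  · exact ⟨k - 1, by omega, by omega, by rw [Nat.sub_add_cancel (by omega), Nat.mod_self]⟩
  · exact ⟨ℓ, by omega, by omega, Nat.mod_eq_of_lt hℓ⟩

section Acyclic
variable {m n : ℕ}

def cycleEdges (k : ℕ) (I : ℕ → Fin m) (J : ℕ → Fin n) : Finset (Fin m × Fin n) :=
  ((Finset.range k).image fun ℓ => (I ℓ, J ℓ)) ∪
    ((Finset.range k).image fun ℓ => (I ((ℓ + 1) % k), J ℓ))

section
variable {k : ℕ} {I : ℕ → Fin m} {J : ℕ → Fin n}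

theorem mem_cycleEdges {e : Fin m × Fin n} :
    e ∈ cycleEdges k I J ↔ ∃ ℓ < k, e = (I ℓ, J ℓ) ∨ e = (I ((ℓ + 1) % k), J ℓ) := by
  simp only [cycleEdges, Finset.mem_union, Finset.mem_image, Finset.mem_range]
  grind

theorem mk_mem_cycleEdges {ℓ : ℕ} (hℓ : ℓ < k) : (I ℓ, J ℓ) ∈ cycleEdges k I J :=
  mem_cycleEdges.2 ⟨ℓ, hℓ, .inl rfl⟩

theorem mk_succ_mem_cycleEdges {ℓ : ℕ} (hℓ : ℓ < k) :
    (I ((ℓ + 1) % k), J ℓ) ∈ cycleEdges k I J :=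
  mem_cycleEdges.2 ⟨ℓ, hℓ, .inr rfl⟩

end

theorem isAcyclicEdges_of_forall_fst_eq_or_eq {A : Finset (Fin m × Fin n)} {ia ib : Fin m}
    {j₀ : Fin n} (hA : ∀ e ∈ A, e.1 = ia ∨ e = (ib, j₀)) : IsAcyclicEdges A := by
  rintro C hCA ⟨k, hk, I, J, hI, hJ, rfl⟩
  obtain ⟨ℓ, hℓ, hIℓ⟩ : ∃ ℓ < k, I ℓ ≠ ia := by
    by_contra! h
    have := hI (Set.mem_Iio.2 (by omega : 0 < k)) (Set.mem_Iio.2 (by omega : 1 < k))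
      ((h 0 (by omega)).trans (h 1 (by omega)).symm)
    omega
  -- the row `I ℓ` carries the two cycle edges at columns `J ℓ` and `J ℓ'`, both equal to `j₀`
  obtain ⟨ℓ', hℓ', hne, hsucc⟩ := exists_ne_add_one_mod_eq hk hℓ
  have h₁ := (hA _ (hCA (mk_mem_cycleEdges hℓ))).resolve_left hIℓ
  have h₂ := (hA _ (hCA (mk_succ_mem_cycleEdges (I := I) (J := J) hℓ'))).resolve_left
    (by rwa [hsucc])
  exact hne (hJ (Set.mem_Iio.2 hℓ') (Set.mem_Iio.2 hℓ)
    ((congrArg Prod.snd h₂).trans (congrArg Prod.snd h₁).symm))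

theorem IsAcyclicEdges.image {m' n' : ℕ} {σ : Fin m' → Fin m} {τ : Fin n' → Fin n}
    (hσ : Function.Injective σ) (hτ : Function.Injective τ) {E : Finset (Fin m' × Fin n')}
    (hE : IsAcyclicEdges E) : IsAcyclicEdges (E.image (Prod.map σ τ)) := by
  rintro C hCE ⟨k, hk, I, J, hI, hJ, rfl⟩
  have hrange : ∀ ℓ < k, (∃ i, σ i = I ℓ) ∧ ∃ j, τ j = J ℓ := fun ℓ hℓ => by
    obtain ⟨p, -, hp⟩ := Finset.mem_image.1 (hCE (mk_mem_cycleEdges hℓ))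
    exact ⟨⟨p.1, congrArg Prod.fst hp⟩, ⟨p.2, congrArg Prod.snd hp⟩⟩
  obtain ⟨⟨i₀, -⟩, ⟨j₀, -⟩⟩ := hrange 0 (by omega)
  have : Nonempty (Fin m') := ⟨i₀⟩
  have : Nonempty (Fin n') := ⟨j₀⟩
  set I' := Function.invFun σ ∘ I
  set J' := Function.invFun τ ∘ J
  have hσI : ∀ ℓ < k, σ (I' ℓ) = I ℓ := fun ℓ hℓ => Function.invFun_eq (hrange ℓ hℓ).1
  have hτJ : ∀ ℓ < k, τ (J' ℓ) = J ℓ := fun ℓ hℓ => Function.invFun_eq (hrange ℓ hℓ).2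
  refine hE (cycleEdges k I' J') (fun e he => ?_)
    ⟨k, hk, I', J', fun a ha b hb hab => hI ha hb ?_, fun a ha b hb hab => hJ ha hb ?_, rfl⟩
  · rw [← (hσ.prodMap hτ).mem_finset_image]
    apply hCE
    obtain ⟨ℓ, hℓ, rfl | rfl⟩ := mem_cycleEdges.1 he
    · rw [Prod.map_apply, hσI ℓ hℓ, hτJ ℓ hℓ]
      exact mk_mem_cycleEdges hℓ
    · rw [Prod.map_apply, hσI _ (Nat.mod_lt _ (by omega)), hτJ ℓ hℓ]
      exact mk_succ_mem_cycleEdges hℓ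
  · rw [← hσI a ha, ← hσI b hb]; exact congrArg σ hab
  · rw [← hτJ a ha, ← hτJ b hb]; exact congrArg τ hab

theorem IsAcyclicEdges.union_of_separated {A B : Finset (Fin m × Fin n)} (P : Fin m → Prop)
    (Q : Fin n → Prop) (hA : ∀ e ∈ A, P e.1 ∧ Q e.2) (hB : ∀ e ∈ B, ¬P e.1 ∧ ¬Q e.2)
    (hAa : IsAcyclicEdges A) (hBa : IsAcyclicEdges B) : IsAcyclicEdges (A ∪ B) := by
  rintro C hC ⟨k, hk, I, J, hI, hJ, rfl⟩
  have hiff : ∀ e ∈ cycleEdges k I J, P e.1 ↔ Q e.2 := fun e he => by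
    rcases Finset.mem_union.1 (hC he) with h | h
    · exact iff_of_true (hA e h).1 (hA e h).2
    · exact iff_of_false (hB e h).1 (hB e h).2
  -- walking along the cycle, the side of `A` or `B` never changes
  have hconst : ∀ ℓ < k, (P (I ℓ) ↔ P (I 0)) ∧ (Q (J ℓ) ↔ P (I 0)) := by
    intro ℓ hℓ
    induction ℓ with
    | zero => exact ⟨Iff.rfl, (hiff _ (mk_mem_cycleEdges hℓ)).symm⟩
    | succ ℓ ih =>
      have hPQ := hiff _ (mk_succ_mem_cycleEdges (I := I) (J := J) (by omega : ℓ < k))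
      rw [Nat.mod_eq_of_lt hℓ] at hPQ
      have hP := hPQ.trans (ih (by omega)).2
      exact ⟨hP, (hiff _ (mk_mem_cycleEdges hℓ)).symm.trans hP⟩
  have hside : ∀ e ∈ cycleEdges k I J, P e.1 ↔ P (I 0) := fun e he => by
    obtain ⟨ℓ, hℓ, rfl | rfl⟩ := mem_cycleEdges.1 he
    · exact (hconst ℓ hℓ).1
    · exact (hconst _ (Nat.mod_lt _ (by omega))).1
  have hcyc : IsSimpleCycle (cycleEdges k I J) := ⟨k, hk, I, J, hI, hJ, rfl⟩
  by_cases h0 : P (I 0)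
  · refine hAa _ (fun e he => ?_) hcyc
    exact (Finset.mem_union.1 (hC he)).resolve_right fun h => (hB e h).1 ((hside e he).2 h0)
  · refine hBa _ (fun e he => ?_) hcyc
    exact (Finset.mem_union.1 (hC he)).resolve_left fun h => h0 ((hside e he).1 (hA e h).1)

theorem IsMRPattern.image {m' n' h : ℕ} {σ : Fin m' → Fin m} {τ : Fin n' → Fin n}
    (hσ : Function.Injective σ) (hτ : Function.Injective τ) {E : Finset (Fin m' × Fin n')}
    (hE : IsMRPattern h E) : IsMRPattern h (E.image (Prod.map σ τ)) := by
  obtain ⟨E', F', hE', hF', rfl⟩ := hE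
  exact ⟨E'.image _, F'.image _, hE'.image hσ hτ, Finset.card_image_le.trans hF',
    Finset.image_union _ _⟩

theorem IsMRPattern.union_of_separated {h₁ h₂ : ℕ} {E₁ E₂ : Finset (Fin m × Fin n)}
    (P : Fin m → Prop) (Q : Fin n → Prop) (h₁E : ∀ e ∈ E₁, P e.1 ∧ Q e.2)
    (h₂E : ∀ e ∈ E₂, ¬P e.1 ∧ ¬Q e.2) (hE₁ : IsMRPattern h₁ E₁) (hE₂ : IsMRPattern h₂ E₂) :
    IsMRPattern (h₁ + h₂) (E₁ ∪ E₂) := by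
  obtain ⟨A₁, B₁, hA₁, hB₁, rfl⟩ := hE₁
  obtain ⟨A₂, B₂, hA₂, hB₂, rfl⟩ := hE₂
  refine ⟨A₁ ∪ A₂, B₁ ∪ B₂, hA₁.union_of_separated P Q ?_ ?_ hA₂,
    (Finset.card_union_le _ _).trans (add_le_add hB₁ hB₂), Finset.union_union_union_comm _ _ _ _⟩
  · exact fun e he => h₁E e (Finset.mem_union_left _ he)
  · exact fun e he => h₂E e (Finset.mem_union_left _ he)

theorem isMRPattern_pair_prod_insert {h : ℕ} (ia ib : Fin m) (j₀ : Fin n) {J : Finset (Fin n)}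
    (hJ : J.card ≤ h) : IsMRPattern h (({ia, ib} : Finset (Fin m)) ×ˢ insert j₀ J) := by
  refine ⟨{ia} ×ˢ insert j₀ J ∪ {(ib, j₀)}, {ib} ×ˢ J,
    isAcyclicEdges_of_forall_fst_eq_or_eq (ia := ia) (ib := ib) (j₀ := j₀) fun e he => ?_,
    by simpa, ?_⟩
  · simp only [Finset.mem_union, Finset.mem_product, Finset.mem_singleton] at he
    tauto
  · ext ⟨i, j⟩
    simp only [Finset.mem_union, Finset.mem_product, Finset.mem_insert, Finset.mem_singleton,
      Prod.mk.injEq]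
    tauto

end Acyclic

section Rectangles
variable {K α β ι : Type*} [Ring K] [Fintype ι] [DecidableEq α] [DecidableEq β]

def rectComb (ia ib : α) (j₀ : β) (js : ι → β) : (ι → K) →ₗ[K] (α × β → K) :=
  Fintype.linearCombination K fun t e =>
    (Pi.single ia 1 - Pi.single ib 1 : α → K) e.1 *
      (Pi.single (js t) 1 - Pi.single j₀ 1 : β → K) e.2

variable {ia ib : α} {j₀ : β} {js : ι → β}

theorem rectComb_mem_balanced [Fintype α] [Fintype β] (μ : ι → K) :
    rectComb ia ib j₀ js μ ∈ balanced K α β := by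
  rw [rectComb, Fintype.linearCombination_apply]
  exact Submodule.sum_mem _ fun t _ =>
    Submodule.smul_mem _ _ (mul_mem_balanced (by simp) (by simp))

theorem rectComb_apply_eq_zero (μ : ι → K) {e : α × β}
    (he : e ∉ ({ia, ib} : Finset α) ×ˢ insert j₀ (Finset.univ.image js)) :
    rectComb ia ib j₀ js μ e = 0 := by
  simp only [Finset.mem_product, Finset.mem_insert, Finset.mem_singleton, Finset.mem_image,
    Finset.mem_univ, true_and, not_and_or, not_or, not_exists] at he
  simp only [rectComb, Fintype.linearCombination_apply, Finset.sum_apply, Pi.smul_apply,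
    Pi.sub_apply, Pi.single_apply, smul_eq_mul]
  rcases he with ⟨h₁, h₂⟩ | ⟨h₁, h₂⟩
  · simp [h₁, h₂]
  · simp [h₁, fun t => Ne.symm (h₂ t)]

theorem rectComb_apply_mk (hab : ia ≠ ib) (hjs : Function.Injective js) (h₀ : ∀ t, js t ≠ j₀)
    (μ : ι → K) (t : ι) : rectComb ia ib j₀ js μ (ia, js t) = μ t := by
  simp only [rectComb, Fintype.linearCombination_apply, Finset.sum_apply, Pi.smul_apply,
    Pi.sub_apply, Pi.single_apply, smul_eq_mul, if_neg hab, h₀, if_false]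
  rw [Finset.sum_eq_single t (fun t' _ ht' => by simp [hjs.ne (Ne.symm ht')]) (by simp)]
  simp

end Rectangles

section Reduction
variable {F : Type*} [Field F]

theorem IsMR.injective_rectComb {m n h : ℕ} {ι : Type*} [Fintype ι]
    {c : Fin m × Fin n → Fin h → F} (hc : IsMR F m n h c) {ia ib : Fin m} {j₀ : Fin n}
    {js : ι → Fin n} (hab : ia ≠ ib) (hjs : Function.Injective js) (h₀ : ∀ t, js t ≠ j₀)
    (hι : Fintype.card ι ≤ h) :
    Function.Injective (Fintype.linearCombination F c ∘ₗ rectComb ia ib j₀ js) := by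
  rw [← LinearMap.ker_eq_bot, LinearMap.ker_eq_bot']
  intro μ hμ
  have hpattern := isMRPattern_pair_prod_insert ia ib j₀ (J := Finset.univ.image js)
    (Finset.card_image_le.trans hι)
  have hzero := (isMR_iff c).1 hc _ hpattern _ (fun e he => rectComb_apply_eq_zero μ he)
    (rectComb_mem_balanced μ) hμ
  funext t
  simpa [rectComb_apply_mk hab hjs h₀] using congrFun hzero (ia, js t)

variable {m' n' d : ℕ}

abbrev marginSupport (m' n' d : ℕ) : Finset (Fin (m' + 2) × Fin (n' + (d + 1))) :=
  {Fin.natAdd m' 0, Fin.natAdd m' 1} ×ˢ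
    insert (Fin.natAdd n' 0) (Finset.univ.image fun t : Fin d => Fin.natAdd n' t.succ)

abbrev marginRectComb (m' n' d : ℕ) :
    (Fin d → F) →ₗ[F] (Fin (m' + 2) × Fin (n' + (d + 1)) → F) :=
  rectComb (Fin.natAdd m' 0) (Fin.natAdd m' 1) (Fin.natAdd n' 0) fun t => Fin.natAdd n' t.succ

theorem IsMRPattern.image_castAdd_union_marginSupport {h' : ℕ} {E : Finset (Fin m' × Fin n')}
    (hE : IsMRPattern h' E) :
    IsMRPattern (h' + d)
      (E.image (Prod.map (Fin.castAdd 2) (Fin.castAdd (d + 1))) ∪ marginSupport m' n' d) := by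
  refine (hE.image (Fin.castAdd_injective _ _) (Fin.castAdd_injective _ _)).union_of_separated
    (fun i => (i : ℕ) < m') (fun j => (j : ℕ) < n') ?_ ?_
    (isMRPattern_pair_prod_insert _ _ _ (Finset.card_image_le.trans (by simp)))
  · intro e he
    obtain ⟨p, -, rfl⟩ := Finset.mem_image.1 he
    simp
  · rintro ⟨i, j⟩ he
    simp only [Finset.mem_product, Finset.mem_insert, Finset.mem_singleton, Finset.mem_image,
      Finset.mem_univ, true_and] at he
    obtain ⟨rfl | rfl, rfl | ⟨t, rfl⟩⟩ := he <;> simp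

variable {h' : ℕ} {c : Fin (m' + 2) × Fin (n' + (d + 1)) → Fin (h' + d) → F}

theorem IsMR.isMR_comp_castAdd (hc : IsMR F (m' + 2) (n' + (d + 1)) (h' + d) c)
    (π : (Fin (h' + d) → F) →ₗ[F] (Fin h' → F))
    (hπ : LinearMap.ker π ≤
      LinearMap.range (Fintype.linearCombination F c ∘ₗ marginRectComb m' n' d)) :
    IsMR F m' n' h' fun p => π (c (Prod.map (Fin.castAdd 2) (Fin.castAdd (d + 1)) p)) := by
  rw [isMR_iff] at hc ⊢
  intro E hE x hsupp hbal hsyn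
  set emb : Fin m' × Fin n' → Fin (m' + 2) × Fin (n' + (d + 1)) :=
    Prod.map (Fin.castAdd 2) (Fin.castAdd (d + 1))
  have hemb : Function.Injective emb :=
    (Fin.castAdd_injective _ _).prodMap (Fin.castAdd_injective _ _)
  obtain ⟨μ, hμ⟩ := hπ (x := Fintype.linearCombination F c (Function.extend emb x 0)) (by
    rw [LinearMap.mem_ker, Fintype.linearCombination_extend hemb, ← hsyn]
    simp [Fintype.linearCombination_apply, emb])
  have hsupp' : ∀ e ∉ E.image emb ∪ marginSupport m' n' d,
      (Function.extend emb x 0 - marginRectComb m' n' d μ) e = 0 := by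
    intro e he
    rw [Finset.mem_union, not_or] at he
    rw [Pi.sub_apply, rectComb_apply_eq_zero μ he.2, sub_zero]
    by_cases hr : ∃ p, emb p = e
    · obtain ⟨p, rfl⟩ := hr
      rw [hemb.extend_apply]
      exact hsupp p fun hp => he.1 (Finset.mem_image_of_mem _ hp)
    · exact Function.extend_apply' _ _ _ hr
  have hzero := hc _ hE.image_castAdd_union_marginSupport _ hsupp'
    (sub_mem (extend_mem_balanced (Fin.castAdd_injective _ _) (Fin.castAdd_injective _ _) hbal)
      (rectComb_mem_balanced μ))
    (by rw [map_sub, ← LinearMap.comp_apply, hμ, sub_self])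
  funext p
  have hp : emb p ∉ marginSupport m' n' d := by simp [emb, Finset.mem_product, Fin.ext_iff]; omega
  simpa [hemb.extend_apply, rectComb_apply_eq_zero μ hp] using congrFun hzero (emb p)

theorem IsMR.exists_isMR_puncture (hc : IsMR F (m' + 2) (n' + (d + 1)) (h' + d) c) :
    ∃ c' : Fin m' × Fin n' → Fin h' → F, IsMR F m' n' h' c' := by
  have hinj : Function.Injective (Fintype.linearCombination F c ∘ₗ marginRectComb m' n' d) :=
    hc.injective_rectComb (by simp [Fin.ext_iff]) (fun _ _ h => by simpa using h)
      (fun t => by simp [Fin.ext_iff]) (by simp)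
  obtain ⟨π, hπ⟩ := (LinearMap.range _).exists_linearMap_ker_eq (k := h') (by
    rw [LinearMap.finrank_range_of_inj hinj]
    simp [add_comm])
  exact ⟨_, hc.isMR_comp_castAdd π hπ.le⟩

end Reduction

theorem statement12_general (m n h h' : ℕ) (hh' : h' ≤ h)
    (hm : 4 ≤ m) (hn : h - h' + 3 ≤ n)
    (F : Type*) [Field F]
    (hex : ∃ c : Fin m × Fin n → Fin h → F, IsMR F m n h c) :
    ∃ c' : Fin (m - 2) × Fin (n - (h - h' + 1)) → Fin h' → F,
      IsMR F (m - 2) (n - (h - h' + 1)) h' c' := by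
  obtain ⟨c, hc⟩ := hex
  obtain ⟨m', rfl⟩ : ∃ m', m = m' + 2 := ⟨m - 2, by omega⟩
  obtain ⟨d, rfl⟩ : ∃ d, h = h' + d := ⟨h - h', by omega⟩
  obtain ⟨n', rfl⟩ : ∃ n', n = n' + (d + 1) := ⟨n - (d + 1), by omega⟩
  rw [show m' + 2 - 2 = m' by omega, show n' + (d + 1) - (h' + d - h' + 1) = n' by omega]
  exact hc.exists_isMR_puncture

/-- Theorem 4.5, near-monotonicity in `h`.  Let `h ≥ h' ≥ 1`,
`m ≥ 4` and `n ≥ h - h' + 3`.  If an MR `(m, n, a=1, b=1, h)` grid code exists over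
`F_q`, then an MR `(m-2, n-(h-h'+1), a=1, b=1, h')` grid code exists over the same
field, so `q(m, n, 1, 1, h) ≥ q(m-2, n-h+h'-1, 1, 1, h')`. -/
theorem statement12 (m n h h' : ℕ) (hh'pos : 1 ≤ h') (hh' : h' ≤ h)
    (hm : 4 ≤ m) (hn : h - h' + 3 ≤ n)
    (F : Type*) [Field F] [Fintype F]
    (hex : ∃ c : Fin m × Fin n → Fin h → F, IsMR F m n h c) :
    ∃ c' : Fin (m - 2) × Fin (n - (h - h' + 1)) → Fin h' → F,
      IsMR F (m - 2) (n - (h - h' + 1)) h' c' :=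
  statement12_general m n h h' hh' hm hn F hex
end

section
/- Let H be the parity-check matrix of an (m, n, a=1, b=1, h) grid code over a finite field F_q (with arbitrary global parity rows), and let E ⊆ [m]×[n] be a pattern with rank(H|_E) = |E|. Then there exists a subset E' ⊆ E with |E'| ≥ |E| − h such that E' is acyclic. -/
/-!
Deleting the `h` global rows of `H|_E` lowers its rank by at most `h`, so some `|E| - h` edges
of `E` have linearly independent top parts. The top part of column `(i, j)` is the incidence
vector of the edge `ij` (with the check of column `n` dropped), and along a simple cycle the
incidence vectors of the odd edges and of the even edges have the same sum. So those edges
contain no cycle.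
-/

open Finset

open Submodule Module

section LinearAlgebra

variable {K V W ι : Type*} [Field K] [AddCommGroup V] [Module K V] [AddCommGroup W] [Module K W]

theorem LinearIndepOn.finrank_span_image_eq_card {v : ι → V} {s : Finset ι}
    (hs : LinearIndepOn K v (s : Set ι)) : finrank K (span K (v '' s)) = s.card := by
  rw [Set.image_eq_range, finrank_span_eq_card hs]
  exact Fintype.card_coe s

theorem LinearIndepOn.card_le_finrank_span_image_add_finrank [FiniteDimensional K W]
    {v : ι → V} {w : ι → W} {s : Finset ι}
    (hs : LinearIndepOn K (fun i => (v i, w i)) (s : Set ι)) :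
    s.card ≤ finrank K (span K (v '' s)) + finrank K W := by
  have hfin : FiniteDimensional K (span K (v '' s)) :=
    FiniteDimensional.span_of_finite K (s.finite_toSet.image v)
  have hle : span K ((fun i => (v i, w i)) '' s) ≤
      (span K (v '' s)).map (LinearMap.inl K V W) ⊔ LinearMap.range (LinearMap.inr K V W) := by
    rw [span_le]
    rintro _ ⟨i, hi, rfl⟩
    exact mem_sup.mpr ⟨(v i, 0), mem_map_of_mem (subset_span (Set.mem_image_of_mem v hi)),
      (0, w i), LinearMap.mem_range_self _ _, by simp⟩
  calc s.card = finrank K (span K ((fun i => (v i, w i)) '' s)) :=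
        hs.finrank_span_image_eq_card.symm
    _ ≤ finrank K ((span K (v '' s)).map (LinearMap.inl K V W) ⊔
          LinearMap.range (LinearMap.inr K V W) : Submodule K (V × W)) :=
        Submodule.finrank_mono hle
    _ ≤ finrank K ((span K (v '' s)).map (LinearMap.inl K V W)) +
          finrank K (LinearMap.range (LinearMap.inr K V W)) :=
        Submodule.finrank_add_le_finrank_add_finrank _ _
    _ = finrank K (span K (v '' s)) + finrank K W := by
        rw [(Submodule.equivMapOfInjective _ LinearMap.inl_injective _).finrank_eq.symm,
          LinearMap.finrank_range_of_inj LinearMap.inr_injective]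

theorem LinearIndepOn.exists_subset_linearIndepOn_fst [FiniteDimensional K W]
    {v : ι → V} {w : ι → W} {s : Finset ι}
    (hs : LinearIndepOn K (fun i => (v i, w i)) (s : Set ι)) :
    ∃ t ⊆ s, s.card ≤ t.card + finrank K W ∧ LinearIndepOn K v (t : Set ι) := by
  obtain ⟨b, hbs, -, hspan, hb⟩ :=
    exists_linearIndepOn_extension (linearIndepOn_empty K v) (Set.empty_subset (s : Set ι))
  have hbfin : b.Finite := s.finite_toSet.subset hbs
  have hspan_eq : span K (v '' s) = span K (v '' b) :=
    le_antisymm (span_le.mpr hspan) (span_mono (Set.image_mono hbs))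
  refine ⟨hbfin.toFinset, by simpa using hbs, ?_, by simpa using hb⟩
  calc s.card ≤ finrank K (span K (v '' s)) + finrank K W :=
        hs.card_le_finrank_span_image_add_finrank
    _ = hbfin.toFinset.card + finrank K W := by
        rw [hspan_eq, ← (show LinearIndepOn K v (hbfin.toFinset : Set ι) by simpa using hb)
          |>.finrank_span_image_eq_card, hbfin.coe_toFinset]

end LinearAlgebra

theorem LinearIndepOn.sum_ne_sum_of_disjoint {R M ι : Type*} [Semiring R] [Nontrivial R]
    [AddCommMonoid M] [Module R M] [DecidableEq ι] {v : ι → M} {P Q : Finset ι}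
    (h : LinearIndepOn R v (P ∪ Q : Finset ι)) (hPQ : Disjoint P Q) (hP : P.Nonempty) :
    ∑ i ∈ P, v i ≠ ∑ i ∈ Q, v i := by
  intro hsum
  obtain ⟨i, hi⟩ := hP
  have := linearIndepOn_finset_iffₛ.mp h (fun j => if j ∈ P then 1 else 0)
    (fun j => if j ∈ Q then 1 else 0) ?_ i (mem_union_left _ hi)
  · simp [hi, disjoint_left.mp hPQ hi] at this
  · simpa [ite_smul, sum_ite_mem, union_inter_cancel_left, union_inter_cancel_right] using hsum

theorem Matrix.linearIndepOn_col_of_rank_submatrix_eq_card {K m n : Type*} [Field K]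
    [Fintype m] (A : Matrix m n K) {s : Finset n}
    (h : (A.submatrix id (fun j : s => (j : n))).rank = s.card) :
    LinearIndepOn K A.col (s : Set n) := by
  rw [Matrix.rank_eq_finrank_span_cols] at h
  rw [LinearIndepOn, linearIndependent_iff_card_eq_finrank_span, Set.finrank]
  exact (Fintype.card_coe s).trans h.symm

theorem Finset.sum_range_add_one_mod {M : Type*} [AddCommMonoid M] (g : ℕ → M) (k : ℕ) :
    ∑ ℓ ∈ range k, g ((ℓ + 1) % k) = ∑ ℓ ∈ range k, g ℓ := by
  cases k with
  | zero => simp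
  | succ k =>
    rw [sum_range_succ, sum_range_succ', Nat.mod_self]
    congr 1
    exact sum_congr rfl fun ℓ hℓ => by rw [Nat.mod_eq_of_lt (by simpa using hℓ)]

section GridCode

variable {F : Type*} [Field F] {m n : ℕ}

variable (F m n) in
def gridTop (e : Fin m × Fin n) : Fin m ⊕ Fin (n - 1) → F :=
  Sum.elim (fun i => if e.1 = i then 1 else 0) (fun j => if (e.2 : ℕ) = j then 1 else 0)

theorem sum_gridTop_rotate (I : ℕ → Fin m) (J : ℕ → Fin n) (k : ℕ) :
    ∑ ℓ ∈ range k, gridTop F m n (I ℓ, J ℓ) =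
      ∑ ℓ ∈ range k, gridTop F m n (I ((ℓ + 1) % k), J ℓ) := by
  funext r
  rcases r with i | j
  · simp only [Finset.sum_apply, gridTop, Sum.elim_inl]
    exact (sum_range_add_one_mod (fun ℓ => if I ℓ = i then (1 : F) else 0) k).symm
  · simp only [Finset.sum_apply, gridTop, Sum.elim_inr]

theorem IsSimpleCycle.not_linearIndepOn_gridTop {C : Finset (Fin m × Fin n)}
    (hC : IsSimpleCycle C) : ¬ LinearIndepOn F (gridTop F m n) (C : Set (Fin m × Fin n)) := by
  obtain ⟨k, hk, I, J, hI, hJ, rfl⟩ := hC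
  have hnext : ∀ ℓ < k, (ℓ + 1) % k < k ∧ (ℓ + 1) % k ≠ ℓ := fun ℓ hℓ => by
    refine ⟨Nat.mod_lt _ (by omega), ?_⟩
    rcases Nat.lt_or_ge (ℓ + 1) k with hlt | hge
    · rw [Nat.mod_eq_of_lt hlt]; omega
    · rw [show ℓ + 1 = k by omega, Nat.mod_self]; omega
  have hinj : ∀ f : ℕ → Fin m, Set.InjOn (fun ℓ => (f ℓ, J ℓ)) (range k : Set ℕ) :=
    fun f ℓ hℓ ℓ' hℓ' h => hJ (by simpa using hℓ) (by simpa using hℓ') (congrArg Prod.snd h)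
  have hdisj : Disjoint ((range k).image fun ℓ => (I ℓ, J ℓ))
      ((range k).image fun ℓ => (I ((ℓ + 1) % k), J ℓ)) := by
    rw [disjoint_left]
    intro _ hP hQ
    obtain ⟨ℓ, hℓ, rfl⟩ := mem_image.mp hP
    obtain ⟨ℓ', hℓ', h⟩ := mem_image.mp hQ
    rw [mem_range] at hℓ hℓ'
    obtain rfl : ℓ = ℓ' := hJ hℓ hℓ' (congrArg Prod.snd h).symm
    exact (hnext ℓ hℓ).2 (hI (hnext ℓ hℓ).1 hℓ (congrArg Prod.fst h))
  intro h
  refine h.sum_ne_sum_of_disjoint hdisj ((nonempty_range_iff.mpr (by omega)).image _) ?_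
  rw [sum_image (hinj I), sum_image (hinj _), sum_gridTop_rotate]

theorem isAcyclicEdges_of_linearIndepOn_gridTop {E : Finset (Fin m × Fin n)}
    (hE : LinearIndepOn F (gridTop F m n) (E : Set (Fin m × Fin n))) : IsAcyclicEdges E :=
  fun _ hCE hC => hC.not_linearIndepOn_gridTop (hE.mono (by simpa using hCE))

end GridCode

theorem statement15_general (m n h : ℕ)
    (F : Type*) [Field F] (c : Fin m × Fin n → Fin h → F)
    (E : Finset (Fin m × Fin n))
    (hE : ((gridH F m n h c).submatrix id
      (fun e : E => (e : Fin m × Fin n))).rank = E.card) :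
    ∃ E' ⊆ E, E.card - h ≤ E'.card ∧ IsAcyclicEdges E' := by
  have hcols := (gridH F m n h c).linearIndepOn_col_of_rank_submatrix_eq_card hE
  have hsplit : LinearIndepOn F (fun e => (gridTop F m n e, c e)) (E : Set (Fin m × Fin n)) := by
    refine LinearIndepOn.of_comp (LinearMap.funLeft F F (Equiv.sumAssoc _ _ _).symm ∘ₗ
      (LinearEquiv.sumArrowLequivProdArrow _ _ F F).symm.toLinearMap) ?_
    -- the column `(i, j)` of `gridH` is `(gridTop (i, j), c (i, j))` after reassociating rows
    convert hcols using 1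
    funext e r
    rcases r with i | j | k <;> rfl
  obtain ⟨E', hE'E, hcard, hE'⟩ := hsplit.exists_subset_linearIndepOn_fst
  rw [Module.finrank_fin_fun] at hcard
  exact ⟨E', hE'E, by omega, isAcyclicEdges_of_linearIndepOn_gridTop hE'⟩

/-- Holzbaur et al., "only if" direction of Theorem 2.1.  Let `H` be
the parity-check matrix of an `(m, n, a=1, b=1, h)` grid code with arbitrary global
parity rows `c`, and let `E` be a pattern with `rank H|_E = |E|`.  Then there is
`E' ⊆ E` with `|E'| ≥ |E| - h` such that `E'` is acyclic. -/
theorem statement15 (m n h : ℕ) (hm : 2 ≤ m) (hn : 2 ≤ n) (hh : 1 ≤ h)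
    (F : Type*) [Field F] [Fintype F] (c : Fin m × Fin n → Fin h → F)
    (E : Finset (Fin m × Fin n))
    (hE : ((gridH F m n h c).submatrix id
      (fun e : E => (e : Fin m × Fin n))).rank = E.card) :
    ∃ E' ⊆ E, E.card - h ≤ E'.card ∧ IsAcyclicEdges E' :=
  statement15_general m n h F c E hE
end

section
/- Let h ≥ 2 and let q be a prime power. Suppose A_1, …, A_h ⊆ F_q^h are sets of nonzero vectors that are projectively distinct (any two distinct vectors in A_1 ∪ ⋯ ∪ A_h are linearly independent over F_q; in particular, as sets of projective points the A_ℓ are pairwise disjoint), each of size at least N. If there is no choice of vectors a_1 ∈ A_1, …, a_h ∈ A_h that is linearly dependent over F_q, then q ≥ N/(h−1) − 4. -/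
open Finset

/-!
A nonzero `w` cannot be orthogonal to a vector of every `A ℓ`: such a transversal is a basis, and
`w` would be orthogonal to all of `F^h`. So each of the `q^h - 1` nonzero vectors `w` is orthogonal
to at most `h - 1` of the classes. Conversely, a class of `N` projectively distinct vectors is
orthogonal to many `w`: each of its vectors to `q^(h-1) - 1` of them and each pair to
`q^(h-2) - 1`, so Cauchy–Schwarz applied to the number of vectors of the class orthogonal to `w`
bounds from below the number of `w` orthogonal to some vector of the class. Comparing the two
counts gives `N ≤ (h - 1) q`.
-/

section Orthogonal

variable {F ι : Type*} [Field F] [Fintype ι] [DecidableEq ι]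

theorem eq_zero_of_forall_dotProduct_eq_zero {u : ι → ι → F} (hu : LinearIndependent F u)
    {w : ι → F} (hw : ∀ i, u i ⬝ᵥ w = 0) : w = 0 := by
  have hunit := (Matrix.linearIndependent_rows_iff_isUnit (A := Matrix.of u)).mp hu
  apply Matrix.mulVec_injective_iff_isUnit.mpr hunit
  ext i
  simpa [Matrix.mulVec] using hw i

variable [Fintype F] [DecidableEq F] {κ : Type*} [Fintype κ]

theorem card_filter_forall_dotProduct_eq_zero {u : κ → ι → F} (hu : LinearIndependent F u) :
    #{w | ∀ i, u i ⬝ᵥ w = 0} = Fintype.card F ^ (Fintype.card ι - Fintype.card κ) := by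
  have hdim := LinearMap.finrank_range_add_finrank_ker (Matrix.of u).mulVecLin
  rw [← Matrix.rank, LinearIndependent.rank_matrix (M := Matrix.of u) hu, Module.finrank_fintype_fun_eq_card] at hdim
  have hker : #{w | ∀ i, u i ⬝ᵥ w = 0} = Nat.card (LinearMap.ker (Matrix.of u).mulVecLin) := by
    rw [← Fintype.card_subtype, ← Nat.card_eq_fintype_card]
    exact Nat.card_congr (Equiv.subtypeEquivRight fun w => by simp [funext_iff, Matrix.mulVec])
  rw [hker, Module.natCard_eq_pow_finrank (K := F), Nat.card_eq_fintype_card]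
  congr 1
  omega

theorem card_filter_ne_zero_forall_dotProduct_eq_zero {u : κ → ι → F}
    (hu : LinearIndependent F u) :
    #{w | w ≠ 0 ∧ ∀ i, u i ⬝ᵥ w = 0} =
      Fintype.card F ^ (Fintype.card ι - Fintype.card κ) - 1 := by
  rw [← card_filter_forall_dotProduct_eq_zero hu,
    ← card_erase_of_mem (s := {w | ∀ i, u i ⬝ᵥ w = 0}) (a := 0) (by simp)]
  congr 1
  ext w
  simp

end Orthogonal

section Incidence

variable {α β : Type*} [DecidableEq α] (B : Finset α) (W : Finset β) (R : α → β → Prop)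
  [∀ v w, Decidable (R v w)] {a b : ℕ}

theorem sum_card_filter_sq_eq (ha : ∀ v ∈ B, #{w ∈ W | R v w} = a)
    (hb : ∀ u ∈ B, ∀ v ∈ B, u ≠ v → #{w ∈ W | R u w ∧ R v w} = b) :
    ∑ w ∈ W, #{v ∈ B | R v w} ^ 2 = #B * a + #B * (#B - 1) * b := by
  have hpairs : ∀ w, #{v ∈ B | R v w} ^ 2 = #{p ∈ B ×ˢ B | R p.1 w ∧ R p.2 w} := fun w => by
    rw [sq, ← card_product, filter_product (p := (R · w)) (q := (R · w))]
  have hcount := sum_card_bipartiteAbove_eq_sum_card_bipartiteBelow (s := B ×ˢ B) (t := W)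
    (fun p w => R p.1 w ∧ R p.2 w)
  simp only [bipartiteAbove, bipartiteBelow] at hcount
  rw [sum_congr rfl fun w _ => hpairs w, ← hcount, ← diag_union_offDiag,
    sum_union (disjoint_diag_offDiag _)]
  congr 1
  · rw [sum_congr rfl (g := fun _ => a), sum_const, diag_card, smul_eq_mul]
    intro p hp
    obtain ⟨hp, hpp⟩ := mem_diag.mp hp
    simpa [← hpp] using ha p.1 hp
  · rw [sum_congr rfl (g := fun _ => b), sum_const, offDiag_card, smul_eq_mul, Nat.mul_sub_one]
    intro p hp
    obtain ⟨hu, hv, huv⟩ := mem_offDiag.mp hp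
    exact hb _ hu _ hv huv

theorem sq_card_mul_le_card_filter_exists_mul (ha : ∀ v ∈ B, #{w ∈ W | R v w} = a)
    (hb : ∀ u ∈ B, ∀ v ∈ B, u ≠ v → #{w ∈ W | R u w ∧ R v w} = b) :
    (#B * a) ^ 2 ≤ #{w ∈ W | ∃ v ∈ B, R v w} * (#B * a + #B * (#B - 1) * b) := by
  set x : β → ℕ := fun w => #{v ∈ B | R v w}
  have hsum : ∑ w ∈ W, x w = #B * a := by
    have hcount := sum_card_bipartiteAbove_eq_sum_card_bipartiteBelow (s := B) (t := W) R
    simp only [bipartiteAbove, bipartiteBelow] at hcount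
    rw [← hcount, sum_congr rfl ha, sum_const, smul_eq_mul]
  have hsupp : {w ∈ W | ∃ v ∈ B, R v w} = {w ∈ W | x w ≠ 0} := by
    ext w
    simp [x]
  rw [← sum_card_filter_sq_eq B W R ha hb, ← hsum, hsupp, ← sum_filter_ne_zero]
  calc (∑ w ∈ W with x w ≠ 0, x w) ^ 2
      ≤ #{w ∈ W | x w ≠ 0} * ∑ w ∈ W with x w ≠ 0, x w ^ 2 := sq_sum_le_card_mul_sum_sq
    _ ≤ #{w ∈ W | x w ≠ 0} * ∑ w ∈ W, x w ^ 2 := by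
      gcongr
      exact filter_subset _ _

end Incidence

theorem sum_card_filter_le_card_sub_one_mul {ι β : Type*} [Fintype ι] (W : Finset β)
    (R : ι → β → Prop) [∀ ℓ w, Decidable (R ℓ w)] (hmiss : ∀ w ∈ W, ∃ ℓ, ¬ R ℓ w) :
    ∑ ℓ, #{w ∈ W | R ℓ w} ≤ (Fintype.card ι - 1) * #W := by
  have hcount := sum_card_bipartiteAbove_eq_sum_card_bipartiteBelow (s := univ) (t := W) R
  simp only [bipartiteAbove, bipartiteBelow] at hcount
  rw [hcount, mul_comm, ← smul_eq_mul, ← sum_const]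
  refine sum_le_sum fun w hw => ?_
  obtain ⟨ℓ, hℓ⟩ := hmiss w hw
  exact Nat.le_sub_one_of_lt (card_lt_card (filter_ssubset.2 ⟨ℓ, mem_univ ℓ, hℓ⟩))

theorem le_succ_mul_of_sq_mul_le {N k q : ℕ} (hN : 0 < N) (hq : 2 ≤ q)
    (H : (k + 2) * (N * (q ^ (k + 1) - 1)) ^ 2 ≤
      (k + 1) * (q ^ (k + 2) - 1) * (N * (q ^ (k + 1) - 1) + N * (N - 1) * (q ^ k - 1))) :
    N ≤ (k + 1) * q := by
  have HR := (Nat.cast_le (α := ℝ)).2 H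
  push_cast [Nat.cast_sub (Nat.one_le_pow _ _ (by omega : 0 < q)), Nat.cast_sub hN] at HR
  have hNR : (1 : ℝ) ≤ N := by exact_mod_cast hN
  have hqR : (2 : ℝ) ≤ q := by exact_mod_cast hq
  have hP : (1 : ℝ) ≤ (q : ℝ) ^ k := one_le_pow₀ (by linarith)
  have hk : (0 : ℝ) ≤ k := k.cast_nonneg
  rw [pow_succ, pow_add] at HR
  set P : ℝ := (q : ℝ) ^ k
  set a := P * q - 1
  set T := P * q ^ 2 - 1
  have ha : 0 < a := by nlinarith
  -- `a ^ 2 - T * (P - 1) = P * (q - 1) ^ 2`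
  have hTb : T * (P - 1) ≤ a ^ 2 := by nlinarith [sq_nonneg ((q : ℝ) - 1)]
  have hT : T ≤ (q + 1) * a := by nlinarith
  have H1 : (k + 2) * N * a ^ 2 ≤ (k + 1) * (T * a + (N - 1) * (T * (P - 1))) := by
    refine le_of_mul_le_mul_left ?_ (by linarith : (0 : ℝ) < N)
    linear_combination HR
  have H2 : (N + k + 1) * a ^ 2 ≤ (k + 1) * T * a := by
    nlinarith [mul_le_mul_of_nonneg_left hTb (mul_nonneg (by linarith : (0 : ℝ) ≤ k + 1)
      (sub_nonneg.2 hNR))]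
  have H3 : (N + k + 1) * a ≤ (k + 1) * (q + 1) * a := by
    refine le_of_mul_le_mul_left ?_ ha
    nlinarith [mul_le_mul_of_nonneg_left hT (by linarith : (0 : ℝ) ≤ k + 1)]
  have : (N : ℝ) ≤ (k + 1) * q := by nlinarith [le_of_mul_le_mul_right H3 ha]
  exact_mod_cast this

theorem card_le_card_sub_one_mul_of_forall_linearIndependent {ι F : Type*} [Fintype ι]
    [DecidableEq ι] [Field F] [Fintype F] [DecidableEq F] {N : ℕ} (hι : 2 ≤ Fintype.card ι)
    {A : ι → Finset (ι → F)} (hnz : ∀ ℓ, ∀ v ∈ A ℓ, v ≠ 0)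
    (hproj : ∀ ℓ, ∀ u ∈ A ℓ, ∀ v ∈ A ℓ, u ≠ v → LinearIndependent F ![u, v])
    (hcard : ∀ ℓ, #(A ℓ) = N)
    (hindep : ∀ a : ι → ι → F, (∀ ℓ, a ℓ ∈ A ℓ) → LinearIndependent F a) :
    N ≤ (Fintype.card ι - 1) * Fintype.card F := by
  obtain ⟨k, hk⟩ : ∃ k, Fintype.card ι = k + 2 := ⟨_, (Nat.sub_add_cancel hι).symm⟩
  rcases Nat.eq_zero_or_pos N with rfl | hN
  · exact Nat.zero_le _
  set q := Fintype.card F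
  set W : Finset (ι → F) := {w | w ≠ 0}
  have hW : #W = q ^ (k + 2) - 1 := by
    simp only [W]
    rw [filter_ne', card_erase_of_mem (mem_univ 0), card_univ, Fintype.card_fun, hk]
  have ha : ∀ ℓ, ∀ v ∈ A ℓ, #{w ∈ W | v ⬝ᵥ w = 0} = q ^ (k + 1) - 1 := fun ℓ v hv => by
    have := card_filter_ne_zero_forall_dotProduct_eq_zero
      (linearIndependent_unique_iff.2 (hnz ℓ v hv) : LinearIndependent F fun _ : Unit => v)
    simpa [W, filter_filter, hk] using this
  have hb : ∀ ℓ, ∀ u ∈ A ℓ, ∀ v ∈ A ℓ, u ≠ v →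
      #{w ∈ W | u ⬝ᵥ w = 0 ∧ v ⬝ᵥ w = 0} = q ^ k - 1 := fun ℓ u hu v hv huv => by
    have := card_filter_ne_zero_forall_dotProduct_eq_zero (hproj ℓ u hu v hv huv)
    simpa [W, filter_filter, hk, Fin.forall_fin_two] using this
  have hmiss : ∀ w ∈ W, ∃ ℓ, ¬ ∃ v ∈ A ℓ, v ⬝ᵥ w = 0 := by
    intro w hw
    by_contra! hmeet
    choose a ha hdot using hmeet
    exact (mem_filter.1 hw).2 (eq_zero_of_forall_dotProduct_eq_zero (hindep a ha) hdot)
  refine hk ▸ le_succ_mul_of_sq_mul_le hN Fintype.one_lt_card ?_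
  calc (k + 2) * (N * (q ^ (k + 1) - 1)) ^ 2
      ≤ ∑ ℓ, #{w ∈ W | ∃ v ∈ A ℓ, v ⬝ᵥ w = 0} *
          (N * (q ^ (k + 1) - 1) + N * (N - 1) * (q ^ k - 1)) := by
        rw [← hk, ← smul_eq_mul, ← card_univ, ← sum_const]
        refine sum_le_sum fun ℓ _ => ?_
        simpa [hcard ℓ] using sq_card_mul_le_card_filter_exists_mul (A ℓ) W _ (ha ℓ) (hb ℓ)
    _ ≤ _ := by
        rw [← sum_mul, ← hW]
        gcongr
        simpa [hk] using sum_card_filter_le_card_sub_one_mul W _ hmiss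

/-- Lemma 3.1 of Gopi et al..  Let `h ≥ 2` and let
`A 0, …, A (h-1) ⊆ F_q^h` be sets of nonzero, pairwise projectively distinct vectors,
each of size at least `N`.  If every transversal `a 0 ∈ A 0, …, a (h-1) ∈ A (h-1)` is
linearly independent over `F_q`, then `q ≥ N / (h - 1) - 4`. -/
theorem statement17 (h N : ℕ) (hh : 2 ≤ h)
    (F : Type*) [Field F] [Fintype F]
    (A : Fin h → Finset (Fin h → F))
    (hnz : ∀ ℓ, ∀ v ∈ A ℓ, v ≠ 0)
    (hproj : ∀ ℓ ℓ' : Fin h, ∀ u ∈ A ℓ, ∀ v ∈ A ℓ', u ≠ v → LinearIndependent F ![u, v])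
    (hsize : ∀ ℓ, N ≤ (A ℓ).card)
    (hindep : ∀ a : Fin h → Fin h → F, (∀ ℓ, a ℓ ∈ A ℓ) → LinearIndependent F a) :
    (N : ℝ) / ((h : ℝ) - 1) - 4 ≤ (Fintype.card F : ℝ) := by
  classical
  choose B hBA hB using fun ℓ => exists_subset_card_eq (hsize ℓ)
  have hN : N ≤ (h - 1) * Fintype.card F := by
    simpa using card_le_card_sub_one_mul_of_forall_linearIndependent (by simpa using hh)
      (fun ℓ v hv => hnz ℓ v (hBA ℓ hv)) (fun ℓ u hu v hv => hproj ℓ ℓ u (hBA ℓ hu) v (hBA ℓ hv))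
      hB (fun a ha => hindep a fun ℓ => hBA ℓ (ha ℓ))
  have hh1 : (0 : ℝ) < h - 1 := by
    have : (2 : ℝ) ≤ h := by exact_mod_cast hh
    linarith
  have hNR : (N : ℝ) ≤ (h - 1) * Fintype.card F := by
    have := (Nat.cast_le (α := ℝ)).2 hN
    push_cast [Nat.cast_sub (by omega : 1 ≤ h)] at this
    exact this
  have : (N : ℝ) / (h - 1) ≤ Fintype.card F := by
    rwa [div_le_iff₀ hh1, mul_comm]
  linarith
end
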